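/- arXiv:2601.20855 — 3 statements merged into one kernel-verified Lean document; each statement's English description precedes it below -/
import Mathlib

section
/- Let α be irrational and f : 𝕋 → 𝕋 a measurable coboundary over rotation by α, with f = F∘T_α − F for measurable F. Fix k ≥ 1 and 0 < j ≤ k. Then the skew product T on 𝕋^k given by T(x_1,…,x_k) = (x_1+α, x_2+x_1, …, x_j+x_{j−1}, x_{j+1}+f(x_1)+x_j, x_{j+2}+x_{j+1}, …, x_k+x_{k−1}) is measurably isomorphic to S(x_1,…,x_k) = (x_1+α, x_2+x_1, …, x_k+x_{k−1}) on (𝕋^k, Haar), provided that additionally F = G_2∘T_α − G_2, G_2 = G_3∘T_α − G_3, …, G_{k−j−1} = G_{k−j}∘T_α − G_{k−j} for measurable G_i : 𝕋 → 𝕋 (taking G_1 = F). The isomorphism is π(x_1,…,x_k) = (x_1, …, x_j, x_{j+1} − G_1(x_1), x_{j+2} − G_2(x_1), …, x_k − G_{k−j}(x_1)). -/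
open MeasureTheory

/-!
The map `π` is a shear `x ↦ x - c (x₁)` that fixes the first coordinate, so it is bijective, and
under `𝕋^k ≃ 𝕋 × 𝕋^(k-1)` it acts on each fibre by a translation, so it preserves Haar measure.
Coordinate by coordinate, `π ∘ T = S ∘ π` is the cohomological equation
`c_i (t + α) - c_i t = c_{i-1} t + [i = j] f t`, and for `c_i = G_{i-j+1}` (`i ≥ j`), `c_i = 0`
(`i < j`) this is exactly `f = F ∘ T_α - F` at `i = j` and the coboundary chain above it.
-/

section Shear

variable {A : Type*} [AddGroup A]

theorem bijective_sub_comp_apply {ι : Type*} (p : ι) (g : A → ι → A)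
    (hg : ∀ t, g t p = 0) : Function.Bijective fun x : ι → A => x - g (x p) := by
  refine Function.bijective_iff_has_inverse.mpr ⟨fun x => x + g (x p), fun x => ?_, fun x => ?_⟩
  · simp [hg]
  · simp [hg]

variable [MeasureSpace A] [MeasurableAdd A] [MeasurableSub₂ A] [SigmaFinite (volume : Measure A)]
  [(volume : Measure A).IsAddRightInvariant]

theorem measurePreserving_sub_comp_apply {n : ℕ} (p : Fin (n + 1)) (g : A → Fin (n + 1) → A)
    (hgm : Measurable g) (hg : ∀ t, g t p = 0) :
    MeasurePreserving (fun x : Fin (n + 1) → A => x - g (x p)) volume volume := by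
  let e := MeasurableEquiv.piFinSuccAbove (fun _ : Fin (n + 1) => A) p
  have hshear : MeasurePreserving (fun q : A × (Fin n → A) => (q.1, q.2 - g q.1 ∘ p.succAbove))
      volume volume :=
    (MeasurePreserving.id volume).skew_product (g := fun t y => y - g t ∘ p.succAbove)
      (measurable_pi_lambda _ fun i => ((measurable_pi_apply i).comp measurable_snd).sub
        ((measurable_pi_apply _).comp (hgm.comp measurable_fst)))
      (.of_forall fun t => (measurePreserving_sub_right volume _).map_eq)
  have hconj : (fun x : Fin (n + 1) → A => x - g (x p)) =
      e.symm ∘ (fun q => (q.1, q.2 - g q.1 ∘ p.succAbove)) ∘ e := by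
    funext x
    apply e.injective
    ext i
    · simp [e, Fin.insertNthEquiv, hg]
    · simp [e, Fin.insertNthEquiv, Fin.removeNth]
  have he : MeasurePreserving e volume volume := volume_preserving_piFinSuccAbove _ p
  rw [hconj]
  exact (he.symm e).comp (hshear.comp he)

end Shear

section Unipotent

variable {A : Type*} [AddCommGroup A]

def unipotentShift {k : ℕ} (a : A) (x : Fin k → A) : Fin k → A := fun i =>
  x i + if (i : ℕ) = 0 then a else x ⟨(i : ℕ) - 1, Nat.lt_of_le_of_lt (Nat.sub_le _ _) i.2⟩

theorem semiconj_sub_comp_zero_unipotentShift {n : ℕ} (a : A) (c d : ℕ → A → A)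
    (hc : ∀ t, c 0 t = 0) (hd : ∀ t, d 0 t = 0)
    (hcoh : ∀ i, 0 < i → i ≤ n → ∀ t, c i (t + a) = c i t + c (i - 1) t + d i t) :
    Function.Semiconj (fun x : Fin (n + 1) → A => x - fun i : Fin (n + 1) => c i (x 0))
      (fun x => unipotentShift a x + fun i : Fin (n + 1) => d i (x 0)) (unipotentShift a) := by
  intro x
  funext ⟨i, hi⟩
  have hx0 : (unipotentShift a x + fun i : Fin (n + 1) => d i (x 0)) 0 = x 0 + a := by
    simp [unipotentShift, hd]
  rcases i with _ | m
  · simp [unipotentShift, hc, hd]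
  · simp only [Pi.sub_apply, Pi.add_apply, hx0]
    simp [unipotentShift, hcoh (m + 1) m.succ_pos (by omega)]
    abel

-- Coordinates are numbered from `0`, so coordinate `i` is the paper's `x_{i+1}`.
def chainTransfer (j : ℕ) (G : ℕ → A → A) (i : ℕ) (t : A) : A :=
  if j ≤ i then G (i - j + 1) t else 0

theorem chainTransfer_zero {j : ℕ} (hj : 0 < j) (G : ℕ → A → A) : chainTransfer j G 0 = 0 := by
  funext t
  simp [chainTransfer, Nat.not_le.mpr hj]

theorem chainTransfer_add (a : A) {k j : ℕ} (hj : 0 < j) {f : A → A} {G : ℕ → A → A}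
    (hf : ∀ t, f t = G 1 (t + a) - G 1 t)
    (hchain : ∀ i, 1 ≤ i → i + 1 ≤ k - j → ∀ t, G i t = G (i + 1) (t + a) - G (i + 1) t)
    {i : ℕ} (hi : 0 < i) (hik : i < k) (t : A) :
    chainTransfer j G i (t + a) =
      chainTransfer j G i t + chainTransfer j G (i - 1) t + if i = j then f t else 0 := by
  unfold chainTransfer
  rcases Nat.lt_trichotomy i j with hlt | rfl | hgt
  · simp [Nat.not_le.mpr hlt, hlt.ne, show ¬ j ≤ i - 1 by omega]
  · simp [show ¬ i ≤ i - 1 by omega, hf]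
  · rw [if_pos hgt.le, if_pos hgt.le, if_pos (by omega), if_neg hgt.ne',
      show i - 1 - j + 1 = i - j by omega, hchain (i - j) (by omega) (by omega) t]
    abel

theorem measurable_chainTransfer [MeasurableSpace A] {G : ℕ → A → A} (hG : ∀ i, Measurable (G i))
    (j i : ℕ) : Measurable (chainTransfer j G i) := by
  unfold chainTransfer
  split_ifs
  exacts [hG _, measurable_const]

end Unipotent

theorem skew_product_isomorphic_of_coboundary_chain_general
    (α : ℝ) (k j : ℕ) (hk : 0 < k) (hj : 0 < j)
    (f F : AddCircle (1 : ℝ) → AddCircle (1 : ℝ))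
    (hf : ∀ t, f t = F (t + (α : AddCircle (1 : ℝ))) - F t)
    (G : ℕ → AddCircle (1 : ℝ) → AddCircle (1 : ℝ))
    (hG1 : G 1 = F) (hGmeas : ∀ i, Measurable (G i))
    (hchain : ∀ i, 1 ≤ i → i + 1 ≤ k - j →
      ∀ t, G i t = G (i + 1) (t + (α : AddCircle (1 : ℝ))) - G (i + 1) t) :
    let 𝕋 := AddCircle (1 : ℝ)
    let T : (Fin k → 𝕋) → (Fin k → 𝕋) := fun x i =>
      x i + (if (i : ℕ) = 0 then (α : 𝕋) else x ⟨(i : ℕ) - 1, Nat.lt_of_le_of_lt (Nat.sub_le _ _) i.2⟩)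
        + (if (i : ℕ) = j then f (x ⟨0, hk⟩) else 0)
    let S : (Fin k → 𝕋) → (Fin k → 𝕋) := fun x i =>
      x i + (if (i : ℕ) = 0 then (α : 𝕋) else x ⟨(i : ℕ) - 1, Nat.lt_of_le_of_lt (Nat.sub_le _ _) i.2⟩)
    let π : (Fin k → 𝕋) → (Fin k → 𝕋) := fun x i =>
      x i - (if j ≤ (i : ℕ) then G ((i : ℕ) - j + 1) (x ⟨0, hk⟩) else 0)
    Function.Bijective π ∧
    MeasurePreserving π volume volume ∧
    ∀ x, π (T x) = S (π x) := by
  intro 𝕋 T S π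
  obtain ⟨n, rfl⟩ : ∃ n, k = n + 1 := ⟨k - 1, by omega⟩
  have hc0 : ∀ t, chainTransfer j G 0 t = 0 := congrFun (chainTransfer_zero hj G)
  refine ⟨bijective_sub_comp_apply (0 : Fin (n + 1)) (fun t i => chainTransfer j G i t) hc0,
    measurePreserving_sub_comp_apply 0 _
      (measurable_pi_lambda _ fun i => measurable_chainTransfer hGmeas j i) hc0,
    semiconj_sub_comp_zero_unipotentShift (α : 𝕋) (chainTransfer j G)
      (fun i t => if i = j then f t else 0) hc0 (fun t => if_neg hj.ne)
      fun i hi hin t => chainTransfer_add (α : 𝕋) hj (hG1 ▸ hf) hchain hi (by omega) t⟩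

/-- If `f` is a coboundary over rotation by `α` whose transfer function `F = G₁`
extends to a chain of coboundaries `G_i = G_{i+1} ∘ T_α - G_{i+1}` for
`1 ≤ i ≤ k - j - 1`, then the skew product `T` on `𝕋^k` obtained from
`S(x₁,…,x_k) = (x₁+α, x₂+x₁, …, x_k+x_{k−1})` by adding `f(x₁)` in the
`(j+1)`-st coordinate is measurably isomorphic to `S` via
`π(x₁,…,x_k) = (x₁,…,x_j, x_{j+1} − G₁(x₁), …, x_k − G_{k−j}(x₁))`. -/
theorem skew_product_isomorphic_of_coboundary_chain
    (α : ℝ) (hα : Irrational α) (k j : ℕ) (hk : 0 < k) (hj : 0 < j) (hjk : j ≤ k)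
    (f F : AddCircle (1 : ℝ) → AddCircle (1 : ℝ)) (hF : Measurable F)
    (hf : ∀ t, f t = F (t + (α : AddCircle (1 : ℝ))) - F t)
    (G : ℕ → AddCircle (1 : ℝ) → AddCircle (1 : ℝ))
    (hG1 : G 1 = F) (hGmeas : ∀ i, Measurable (G i))
    (hchain : ∀ i, 1 ≤ i → i + 1 ≤ k - j →
      ∀ t, G i t = G (i + 1) (t + (α : AddCircle (1 : ℝ))) - G (i + 1) t) :
    let 𝕋 := AddCircle (1 : ℝ)
    let T : (Fin k → 𝕋) → (Fin k → 𝕋) := fun x i =>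
      x i + (if (i : ℕ) = 0 then (α : 𝕋) else x ⟨(i : ℕ) - 1, Nat.lt_of_le_of_lt (Nat.sub_le _ _) i.2⟩)
        + (if (i : ℕ) = j then f (x ⟨0, hk⟩) else 0)
    let S : (Fin k → 𝕋) → (Fin k → 𝕋) := fun x i =>
      x i + (if (i : ℕ) = 0 then (α : 𝕋) else x ⟨(i : ℕ) - 1, Nat.lt_of_le_of_lt (Nat.sub_le _ _) i.2⟩)
    let π : (Fin k → 𝕋) → (Fin k → 𝕋) := fun x i =>
      x i - (if j ≤ (i : ℕ) then G ((i : ℕ) - j + 1) (x ⟨0, hk⟩) else 0)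
    Function.Bijective π ∧
    MeasurePreserving π volume volume ∧
    ∀ x, π (T x) = S (π x) :=
  skew_product_isomorphic_of_coboundary_chain_general α k j hk hj f F hf G hG1 hGmeas hchain
end

section
/- Let α be irrational and k ≥ 1. The affine skew product S(x_1,…,x_k) = (x_1+α, x_2+x_1, x_3+x_2, …, x_k+x_{k−1}) on 𝕋^k preserves Haar measure and is ergodic. -/
/-!
Write `S x = (1 + N) x + (α, 0, …, 0)`, where `N` shifts the coordinates one step up. As `N` is
nilpotent, `1 + N` is a continuous automorphism of the compact group `𝕋^k`, so `S` preserves Haar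
measure.

On characters, `χₙ ∘ S = e(n₀ α) χ_{Bn}` with `(Bn)ᵢ = nᵢ + nᵢ₊₁` the transpose of `1 + N`. Hence the
Fourier coefficients of an `S`-invariant `L²` function satisfy `cₙ = e(-n₀ α) c_{Bn}`, and `|c|` is
constant along `B`-orbits. If `n` has a nonzero entry of positive index, then below its top nonzero
entry `B` adds that entry at every step, so the orbit is infinite and Parseval forces `cₙ = 0`.
Otherwise `n = (n₀, 0, …, 0)` is fixed by `B`, and `e(n₀ α) ≠ 1` for `n₀ ≠ 0` by irrationality.
So an invariant set has a.e. constant indicator.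
-/

open MeasureTheory Filter Function UnitAddTorus
open scoped ComplexConjugate

variable {G : Type*} {k : ℕ}

def skewProduct [Add G] (a : G) (x : Fin k → G) : Fin k → G := fun i =>
  x i + (if (i : ℕ) = 0 then a else x ⟨(i : ℕ) - 1, Nat.lt_of_le_of_lt (Nat.sub_le _ _) i.2⟩)

section Unipotent

variable [AddCommGroup G]

def shiftRight : AddMonoid.End (Fin k → G) where
  toFun x i := if (i : ℕ) = 0 then 0 else x ⟨(i : ℕ) - 1, Nat.lt_of_le_of_lt (Nat.sub_le _ _) i.2⟩
  map_zero' := by ext; simp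
  map_add' x y := by ext i; split_ifs <;> simp [*]

lemma shiftRight_apply (x : Fin k → G) (i : Fin k) :
    shiftRight x i =
      if (i : ℕ) = 0 then 0 else x ⟨(i : ℕ) - 1, Nat.lt_of_le_of_lt (Nat.sub_le _ _) i.2⟩ :=
  rfl

lemma shiftRight_pow_apply (j : ℕ) (x : Fin k → G) (i : Fin k) :
    (shiftRight ^ j) x i =
      if j ≤ i then x ⟨(i : ℕ) - j, Nat.lt_of_le_of_lt (Nat.sub_le _ _) i.2⟩ else 0 := by
  induction j generalizing i with
  | zero => simp
  | succ j ih =>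
    rw [AddMonoid.End.coe_pow] at ih ⊢
    rw [iterate_succ_apply', shiftRight_apply]
    split_ifs
    · omega
    · rfl
    · rw [ih, if_pos (by simp only; omega)]
      congr 2
      simp only
      omega
    · rw [ih, if_neg (by simp only; omega)]

lemma isNilpotent_shiftRight : IsNilpotent (shiftRight : AddMonoid.End (Fin k → G)) :=
  ⟨k, by ext x i; simp [shiftRight_pow_apply, i.2]⟩

lemma bijective_one_add_shiftRight :
    Bijective ⇑(1 + shiftRight : AddMonoid.End (Fin k → G)) := by
  obtain ⟨u, hu⟩ := isNilpotent_shiftRight.isUnit_one_add (R := AddMonoid.End (Fin k → G))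
  rw [← hu]
  exact bijective_iff_has_inverse.2 ⟨⇑(↑u⁻¹ : AddMonoid.End (Fin k → G)),
    fun x => DFunLike.congr_fun u.inv_mul x, fun x => DFunLike.congr_fun u.mul_inv x⟩

lemma one_add_shiftRight_apply (x : Fin k → G) :
    (1 + shiftRight : AddMonoid.End (Fin k → G)) x = x + shiftRight x :=
  rfl

lemma skewProduct_eq_add (a : G) :
    skewProduct (k := k) a = fun x =>
      (1 + shiftRight : AddMonoid.End (Fin k → G)) x +
        fun i : Fin k => if (i : ℕ) = 0 then a else 0 := by
  ext x i
  simp only [skewProduct, one_add_shiftRight_apply, Pi.add_apply, shiftRight_apply]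
  split_ifs <;> abel

variable [TopologicalSpace G]

lemma continuous_shiftRight : Continuous ⇑(shiftRight : AddMonoid.End (Fin k → G)) :=
  continuous_pi fun i => by
    simp only [shiftRight_apply]
    split_ifs
    · exact continuous_const
    · exact continuous_apply _

theorem measurePreserving_skewProduct [IsTopologicalAddGroup G] [CompactSpace G]
    [SecondCountableTopology G] [MeasurableSpace G] [BorelSpace G]
    (μ : Measure (Fin k → G)) [μ.IsAddHaarMeasure] (a : G) :
    MeasurePreserving (skewProduct a) μ μ := by
  have hA : MeasurePreserving (1 + shiftRight : AddMonoid.End (Fin k → G)) μ μ :=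
    AddMonoidHom.measurePreserving (continuous_id.add continuous_shiftRight)
      bijective_one_add_shiftRight.surjective rfl
  rw [skewProduct_eq_add]
  exact (measurePreserving_add_right μ _).comp hA

end Unipotent

section SkewDual

variable {m : ℕ}

def skewDual (n : Fin (m + 1) → ℤ) : Fin (m + 1) → ℤ :=
  fun i => n i + Fin.lastCases 0 (fun j => n j.succ) i

@[simp]
lemma skewDual_apply_last (n : Fin (m + 1) → ℤ) : skewDual n (Fin.last m) = n (Fin.last m) := by
  simp [skewDual]

@[simp]
lemma skewDual_apply_castSucc (n : Fin (m + 1) → ℤ) (j : Fin m) :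
    skewDual n j.castSucc = n j.castSucc + n j.succ := by
  simp [skewDual]

lemma skewDual_apply_of_forall_gt {n : Fin (m + 1) → ℤ} {i : Fin (m + 1)}
    (h : ∀ l, i < l → n l = 0) : skewDual n i = n i := by
  induction i using Fin.lastCases with
  | last => exact skewDual_apply_last n
  | cast j => rw [skewDual_apply_castSucc, h _ j.castSucc_lt_succ, add_zero]

lemma skewDual_iterate_apply_of_le {n : Fin (m + 1) → ℤ} {i : Fin (m + 1)}
    (h : ∀ l, i < l → n l = 0) (j : ℕ) {l : Fin (m + 1)} (hl : i ≤ l) :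
    skewDual^[j] n l = n l := by
  induction j generalizing l with
  | zero => rfl
  | succ j ih =>
    rw [iterate_succ_apply', skewDual_apply_of_forall_gt fun l' hl' => ?_, ih hl]
    rw [ih (hl.trans hl'.le), h l' (hl.trans_lt hl')]

lemma skewDual_iterate_apply_castSucc {n : Fin (m + 1) → ℤ} {p : Fin m}
    (h : ∀ l, p.succ < l → n l = 0) (j : ℕ) :
    skewDual^[j] n p.castSucc = n p.castSucc + j * n p.succ := by
  induction j with
  | zero => simp
  | succ j ih =>
    rw [iterate_succ_apply', skewDual_apply_castSucc, ih,
      skewDual_iterate_apply_of_le h j le_rfl]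
    push_cast
    ring

lemma injective_skewDual_iterate {n : Fin (m + 1) → ℤ} {p : Fin m} (hp : n p.succ ≠ 0)
    (h : ∀ l, p.succ < l → n l = 0) : Injective fun j => skewDual^[j] n := by
  intro a b hab
  have := congrFun hab p.castSucc
  simp only [skewDual_iterate_apply_castSucc h, add_right_inj] at this
  exact_mod_cast mul_right_cancel₀ hp this

lemma skewDual_eq_self_or_injective_iterate (n : Fin (m + 1) → ℤ) :
    (∀ j : Fin m, n j.succ = 0) ∧ skewDual n = n ∨ Injective fun j => skewDual^[j] n := by
  by_cases hn : ∀ j : Fin m, n j.succ = 0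
  · refine Or.inl ⟨hn, funext fun i => skewDual_apply_of_forall_gt fun l hl => ?_⟩
    obtain ⟨j, rfl⟩ := Fin.exists_succ_eq.2 ((Fin.zero_le i).trans_lt hl).ne'
    exact hn j
  · push Not at hn
    obtain ⟨j, hj⟩ := hn
    obtain ⟨p, hp, hmax⟩ :=
      (Finset.univ.filter fun j : Fin m => n j.succ ≠ 0).exists_max_image id ⟨j, by simpa using hj⟩
    refine Or.inr (injective_skewDual_iterate (by simpa using hp) fun l hl => ?_)
    obtain ⟨q, rfl⟩ := Fin.exists_succ_eq.2 ((Fin.zero_le _).trans_lt hl).ne'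
    by_contra hq
    exact not_lt_of_ge (hmax q (by simpa using hq)) (Fin.succ_lt_succ_iff.1 hl)

end SkewDual

lemma Summable.eq_zero_of_injective_iterate {ι : Type*} {g : ι → ℝ} (hg : Summable g)
    {B : ι → ι} (hgB : ∀ n, g (B n) = g n) {n : ι} (hinj : Injective fun j => B^[j] n) :
    g n = 0 := by
  have horbit : g ∘ (fun j => B^[j] n) = fun _ => g n := by
    funext j
    induction j with
    | zero => rfl
    | succ j ih => simpa [iterate_succ_apply', hgB] using ih
  have := (hg.comp_injective hinj).tendsto_atTop_zero
  rw [horbit] at this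
  exact tendsto_nhds_unique tendsto_const_nhds this

lemma fourier_ne_one_of_not_isOfFinAddOrder {T : ℝ} [Fact (0 < T)] {x : AddCircle T}
    (hx : ¬IsOfFinAddOrder x) {j : ℤ} (hj : j ≠ 0) : fourier j x ≠ 1 := by
  rw [fourier_apply, ne_eq, Circle.coe_eq_one, ← AddCircle.toCircle_zero,
    (AddCircle.injective_toCircle (Fact.out : 0 < T).ne').eq_iff]
  exact fun h => hx (isOfFinAddOrder_iff_zsmul_eq_zero.2 ⟨j, hj, h⟩)

lemma mFourier_apply_add {d : Type*} [Fintype d] (n : d → ℤ) (x y : UnitAddTorus d) :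
    mFourier n (x + y) = mFourier n x * mFourier n y := by
  simp only [mFourier, ContinuousMap.coe_mk, Pi.add_apply, ← Finset.prod_mul_distrib]
  congr! 1 with i
  rw [fourier_apply, fourier_apply, fourier_apply, smul_add, AddCircle.toCircle_add,
    Circle.coe_mul]

lemma mFourier_skewProduct {m : ℕ} (a : UnitAddCircle) (n : Fin (m + 1) → ℤ)
    (x : UnitAddTorus (Fin (m + 1))) :
    mFourier n (skewProduct a x) = fourier (n 0) a * mFourier (skewDual n) x := by
  let v : UnitAddTorus (Fin (m + 1)) := fun i =>
    if (i : ℕ) = 0 then a else x ⟨(i : ℕ) - 1, Nat.lt_of_le_of_lt (Nat.sub_le _ _) i.2⟩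
  let L : Fin (m + 1) → ℤ := fun i => Fin.lastCases 0 (fun j => n j.succ) i
  have hv : mFourier n v = fourier (n 0) a * ∏ j : Fin m, fourier (n j.succ) (x j.castSucc) := by
    simp only [mFourier, ContinuousMap.coe_mk, Fin.prod_univ_succ]
    rfl
  have hL : mFourier L x = ∏ j : Fin m, fourier (n j.succ) (x j.castSucc) := by
    simp [mFourier, Fin.prod_univ_castSucc, L]
  calc mFourier n (skewProduct a x) = mFourier n (x + v) := rfl
    _ = mFourier n x * mFourier n v := mFourier_apply_add n x v
    _ = fourier (n 0) a * (mFourier n x * mFourier L x) := by rw [hv, hL]; ring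
    _ = fourier (n 0) a * mFourier (skewDual n) x := by rw [← mFourier_add]; rfl

section Fourier

/- Mathlib's Fourier analysis on `UnitAddTorus d` is stated for the Haar probability measure
`haarAddCircle` on each factor, installed by these (otherwise local) instances. The default
`volume` on `AddCircle 1` equals it, but not definitionally. -/
attribute [local instance] instMeasureSpaceUnitAddCircle
  instIsAddHaarMeasureUnitAddCircleVolume instIsProbabilityMeasureUnitAddCircleVolume

variable {d : Type*} [Fintype d]

lemma mFourierCoeff_eq_conj_mul_of_comp {T : UnitAddTorus d → UnitAddTorus d}
    (hT : MeasurePreserving T volume volume) {ζ : (d → ℤ) → ℂ} {B : (d → ℤ) → d → ℤ}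
    (hTB : ∀ n x, mFourier n (T x) = ζ n * mFourier (B n) x) {f : UnitAddTorus d → ℂ}
    (hf : AEStronglyMeasurable f volume) (hfT : ∀ x, f (T x) = f x) (n : d → ℤ) :
    mFourierCoeff f n = conj (ζ n) * mFourierCoeff f (B n) := by
  have hg : AEStronglyMeasurable (fun x => mFourier (-n) x • f x) (Measure.map T volume) := by
    rw [hT.map_eq]
    exact (mFourier (-n)).continuous.aestronglyMeasurable.smul hf
  calc mFourierCoeff f n = ∫ x, mFourier (-n) (T x) • f (T x) := by
        rw [← integral_map hT.aemeasurable hg, hT.map_eq]; rfl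
    _ = ∫ x, conj (ζ n) * (mFourier (-B n) x • f x) := by
        simp only [hfT, mFourier_neg]
        simp only [hTB, map_mul, smul_eq_mul, mul_assoc]
    _ = _ := integral_const_mul _ _

lemma ae_eq_const_of_mFourierCoeff_eq_zero (F : Lp ℂ 2 (volume : Measure (UnitAddTorus d)))
    (hF : ∀ n ≠ 0, mFourierCoeff F n = 0) : F =ᵐ[volume] fun _ => mFourierCoeff F 0 := by
  have hsum := hasSum_single (f := fun n => mFourierCoeff F n • mFourierLp 2 n) 0
    fun n hn => by simp [hF n hn]
  set c := mFourierCoeff F 0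
  have hFeq : F = c • mFourierLp 2 0 := (hasSum_mFourier_series_L2 F).unique hsum
  rw [hFeq]
  filter_upwards [Lp.coeFn_smul c (mFourierLp 2 (0 : d → ℤ)),
    coeFn_mFourierLp 2 (0 : d → ℤ)] with x hx hx'
  rw [hx, Pi.smul_apply, hx', mFourier_zero, ContinuousMap.one_apply, smul_eq_mul, mul_one]

theorem ergodic_of_mFourier_comp {T : UnitAddTorus d → UnitAddTorus d}
    (hT : MeasurePreserving T volume volume) {ζ : (d → ℤ) → ℂ} {B : (d → ℤ) → d → ℤ}
    (hζ : ∀ n, ‖ζ n‖ = 1) (hTB : ∀ n x, mFourier n (T x) = ζ n * mFourier (B n) x)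
    (hB : ∀ n ≠ 0, (B n = n ∧ ζ n ≠ 1) ∨ Injective fun j => B^[j] n) :
    Ergodic T volume := by
  refine ⟨hT, ⟨fun s hs hTs => ?_⟩⟩
  set f : UnitAddTorus d → ℂ := s.indicator fun _ => 1
  have hf : MemLp f 2 volume := (memLp_const 1).indicator hs
  have hfT : ∀ x, f (T x) = f x := fun x => by
    simp only [f, ← Set.indicator_comp_right, hTs]; rfl
  have hcoeff : mFourierCoeff (hf.toLp f) = mFourierCoeff f := funext fun n =>
    integral_congr_ae <| hf.coeFn_toLp.mono fun x hx => by simp only [hx]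
  have hrel := mFourierCoeff_eq_conj_mul_of_comp hT hTB hf.1 hfT
  have hzero : ∀ n ≠ 0, mFourierCoeff f n = 0 := by
    intro n hn
    rcases hB n hn with ⟨hfix, hζ1⟩ | hinj
    · have h := hrel n
      rw [hfix] at h
      refine (mul_left_eq_self₀.1 h.symm).resolve_left fun h1 => hζ1 ?_
      simpa using congrArg conj h1
    · have hsq := (hasSum_sq_mFourierCoeff (hf.toLp f)).summable
      rw [hcoeff] at hsq
      have := hsq.eq_zero_of_injective_iterate (fun n => by
        simp only [hrel n, norm_mul, RCLike.norm_conj, hζ, one_mul]) hinj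
      simpa using this
  have hconst := ae_eq_const_of_mFourierCoeff_eq_zero (hf.toLp f) (by simpa [hcoeff] using hzero)
  refine EventuallyConst.of_indicator_const ?_ (one_ne_zero (α := ℂ))
  exact (EventuallyConst.const _).congr (hf.coeFn_toLp.symm.trans hconst).symm

theorem ergodic_skewProduct {m : ℕ} {α : ℝ} (hα : Irrational α) :
    Ergodic (skewProduct (α : UnitAddCircle)) (volume : Measure (UnitAddTorus (Fin (m + 1)))) := by
  have hα' : ¬IsOfFinAddOrder (α : UnitAddCircle) :=
    AddCircle.not_isOfFinAddOrder_iff_forall_rat_ne_div.2 fun q => by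
      simpa using (hα.ne_rat q).symm
  refine ergodic_of_mFourier_comp
    (measurePreserving_skewProduct (volume : Measure (UnitAddTorus (Fin (m + 1)))) _)
    (fun n => by rw [fourier_apply, Circle.norm_coe]) (mFourier_skewProduct _) fun n hn => ?_
  refine (skewDual_eq_self_or_injective_iterate n).imp (fun ⟨hsucc, hfix⟩ => ⟨hfix, ?_⟩) id
  refine fourier_ne_one_of_not_isOfFinAddOrder hα' fun h0 => hn (funext fun i => ?_)
  induction i using Fin.cases with
  | zero => exact h0
  | succ j => exact hsucc j

end Fourier

/-- For irrational `α`, the affine skew product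
`S(x₁,…,x_k) = (x₁+α, x₂+x₁, …, x_k+x_{k−1})` on `𝕋^k` preserves Haar measure
and is ergodic. -/
theorem affine_skew_product_ergodic
    (α : ℝ) (hα : Irrational α) (k : ℕ) (hk : 0 < k) :
    let 𝕋 := AddCircle (1 : ℝ)
    let S : (Fin k → 𝕋) → (Fin k → 𝕋) := fun x i =>
      x i + (if (i : ℕ) = 0 then (α : 𝕋)
        else x ⟨(i : ℕ) - 1, Nat.lt_of_le_of_lt (Nat.sub_le _ _) i.2⟩)
    MeasurePreserving S volume volume ∧ Ergodic S volume := by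
  intro 𝕋 S
  obtain ⟨m, rfl⟩ : ∃ m, k = m + 1 := ⟨k - 1, by omega⟩
  have hvol : (volume : Measure (Fin (m + 1) → AddCircle (1 : ℝ))) =
      Measure.pi fun _ => AddCircle.haarAddCircle := by
    simp [volume_pi, AddCircle.volume_eq_smul_haarAddCircle]
  refine ⟨measurePreserving_skewProduct volume (α : 𝕋), ?_⟩
  rw [hvol]
  exact ergodic_skewProduct hα
end

section
/- Let (Y, S) be uniquely ergodic and (Y', S') a topological system that is orbit equivalent to (Y, S) via a homeomorphism h : Y → Y' (i.e., h maps S-orbits onto S'-orbits). If additionally (Y', S') is a minimal Cantor system strong orbit equivalent to (Y, S), then (Y', S') is uniquely ergodic, and the map sending an S'-invariant measure ν' to its corresponding S-invariant measure under the orbit equivalence is a bijection on invariant measures. -/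
/-! The conjugate `h⁻¹ ∘ S' ∘ h` moves every point along its `S`-orbit by the measurable amount
`j`, so it agrees with `S ^ n` on the cell `j⁻¹' {n}` of a countable measurable partition. A
bijection built from measure-preserving pieces in this way preserves every `S`-invariant measure;
hence pushing forward along `h` maps `S`-invariant measures to `S'`-invariant ones, and, using `m`
in the same way, pushing forward along `h⁻¹` maps them back. These pushforwards are mutually
inverse, so they biject the two sets of invariant probability measures and unique ergodicity
transfers. -/

open MeasureTheory

def UniquelyErgodic {Y : Type*} [MeasurableSpace Y] (S : Y → Y) : Prop :=
  ∃! μ : Measure Y, IsProbabilityMeasure μ ∧ Measure.map S μ = μ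

open Function Set

theorem Set.BijOn.existsUnique_mem {α β : Type*} {f : α → β} {s : Set α} {t : Set β}
    (hf : BijOn f s t) (ht : ∃! y, y ∈ t) : ∃! x, x ∈ s := by
  obtain ⟨y, hy, hyuniq⟩ := ht
  obtain ⟨x, hx, rfl⟩ := hf.surjOn hy
  exact ⟨x, hx, fun x' hx' => hf.injOn hx' hx (hyuniq _ (hf.mapsTo hx'))⟩

theorem measurable_of_forall_ne_continuousAt {α γ : Type*} [TopologicalSpace α]
    [MeasurableSpace α] [OpensMeasurableSpace α] [T1Space α] [TopologicalSpace γ]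
    [MeasurableSpace γ] [BorelSpace γ] {f : α → γ} {a : α} (hf : ∀ x, x ≠ a → ContinuousAt f x) :
    Measurable f :=
  measurable_of_continuousOn_compl_singleton a fun x hx => (hf x hx).continuousWithinAt

namespace MeasurableEquiv

variable {α : Type*} [MeasurableSpace α]

theorem measurable_toEquiv_zpow (T : α ≃ᵐ α) (n : ℤ) : Measurable ⇑(T.toEquiv ^ n) := by
  obtain ⟨k, rfl | rfl⟩ := n.eq_nat_or_neg
  · simpa only [zpow_natCast, Equiv.Perm.coe_pow, coe_toEquiv] using T.measurable.iterate k
  · simpa only [zpow_neg, zpow_natCast, ← inv_pow, Equiv.Perm.coe_pow, Equiv.Perm.inv_def,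
      coe_toEquiv_symm] using T.symm.measurable.iterate k

theorem measurableEmbedding_toEquiv_zpow (T : α ≃ᵐ α) (n : ℤ) :
    MeasurableEmbedding ⇑(T.toEquiv ^ n) :=
  MeasurableEquiv.measurableEmbedding
    { toEquiv := T.toEquiv ^ n
      measurable_toFun := T.measurable_toEquiv_zpow n
      measurable_invFun := by
        simpa only [← Equiv.Perm.inv_def, ← zpow_neg] using T.measurable_toEquiv_zpow (-n) }

end MeasurableEquiv

namespace MeasureTheory

variable {α β : Type*} [MeasurableSpace α] [MeasurableSpace β] {μ : Measure α}

def invariantProbMeasures (S : α → α) : Set (Measure α) :=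
  {μ | IsProbabilityMeasure μ ∧ μ.map S = μ}

theorem MeasurePreserving.toEquiv_zpow {T : α ≃ᵐ α} (hT : MeasurePreserving T μ μ) (n : ℤ) :
    MeasurePreserving ⇑(T.toEquiv ^ n) μ μ := by
  obtain ⟨k, rfl | rfl⟩ := n.eq_nat_or_neg
  · simpa only [zpow_natCast, Equiv.Perm.coe_pow, MeasurableEquiv.coe_toEquiv] using hT.iterate k
  · simpa only [zpow_neg, zpow_natCast, ← inv_pow, Equiv.Perm.coe_pow, Equiv.Perm.inv_def,
      MeasurableEquiv.coe_toEquiv_symm] using (hT.symm T).iterate k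

/-- Invariance of `μ` under the full group of a countable family of `μ`-preserving embeddings. -/
theorem MeasurePreserving.of_bijective_of_eq_apply {ι : Type*} [MeasurableSpace ι] [Countable ι]
    [MeasurableSingletonClass ι] {g : ι → α → α} (hg : ∀ i, MeasurableEmbedding (g i))
    (hgμ : ∀ i, μ.map (g i) = μ) {φ : α → α} (hφ : Bijective φ) {c : α → ι}
    (hc : Measurable c) (hφg : ∀ x, φ x = g (c x) x) : MeasurePreserving φ μ μ := by
  set P : ι → Set α := fun i => c ⁻¹' {i}
  have hPmeas (i : ι) : MeasurableSet (P i) := hc (measurableSet_singleton i)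
  have hPdisj : Pairwise (Disjoint on P) := fun i i' hii' =>
    Disjoint.preimage c (disjoint_singleton.2 hii')
  have hPunion : ⋃ i, P i = univ := by rw [← preimage_iUnion, iUnion_of_singleton, preimage_univ]
  have himage (i : ι) : φ '' P i = g i '' P i := image_congr fun x hx => by rw [hφg, hx]
  have hφmeas : Measurable φ := by
    have : φ = (fun p : α × ι => g p.2 p.1) ∘ fun x => (x, c x) := funext hφg
    rw [this]
    exact (measurable_from_prod_countable_left fun i => (hg i).measurable).comp
      (measurable_id.prodMk hc)
  refine ⟨hφmeas, ?_⟩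
  calc μ.map φ = (Measure.sum fun i => μ.restrict (P i)).map φ := by
        rw [← Measure.restrict_iUnion hPdisj hPmeas, hPunion, Measure.restrict_univ]
    _ = Measure.sum fun i => (μ.restrict (P i)).map (g i) := by
        rw [Measure.map_sum hφmeas.aemeasurable]
        refine congrArg Measure.sum (funext fun i => ?_)
        exact Measure.map_congr ((ae_restrict_of_forall_mem (hPmeas i)) fun x hx => by
          rw [hφg, hx])
    _ = Measure.sum fun i => μ.restrict (φ '' P i) := by
        refine congrArg Measure.sum (funext fun i => ?_)
        conv_rhs => rw [himage, ← hgμ i]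
        rw [(hg i).restrict_map, (hg i).injective.preimage_image]
    _ = μ := by
        rw [← Measure.restrict_iUnion, ← image_iUnion, hPunion, image_univ,
          hφ.surjective.range_eq, Measure.restrict_univ]
        · exact fun i i' hii' => (disjoint_image_iff hφ.injective).2 (hPdisj hii')
        · exact fun i => himage i ▸ (hg i).measurableSet_image.2 (hPmeas i)

theorem MeasurePreserving.of_bijective_of_eq_toEquiv_zpow_apply {T : α ≃ᵐ α}
    (hT : MeasurePreserving T μ μ) {φ : α → α} (hφ : Bijective φ) {c : α → ℤ}
    (hc : Measurable c) (hφT : ∀ x, φ x = (T.toEquiv ^ c x) x) : MeasurePreserving φ μ μ :=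
  of_bijective_of_eq_apply T.measurableEmbedding_toEquiv_zpow (fun n => (hT.toEquiv_zpow n).map_eq)
    hφ hc hφT

theorem mapsTo_map_symm_invariantProbMeasures (h : α ≃ᵐ β) {S : α ≃ᵐ α} {T : β ≃ᵐ β}
    {m : α → ℤ} (hm : Measurable m) (hhS : ∀ x, h (S x) = (T.toEquiv ^ m x) (h x)) :
    MapsTo (fun ν => ν.map h.symm) (invariantProbMeasures T) (invariantProbMeasures S) := by
  rintro ν ⟨hν, hTν⟩
  refine ⟨Measure.isProbabilityMeasure_map h.symm.measurable.aemeasurable, ?_⟩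
  set φ := (h.symm.trans S).trans h
  have hφν : MeasurePreserving φ ν ν :=
    (MeasurePreserving.mk T.measurable hTν).of_bijective_of_eq_toEquiv_zpow_apply φ.bijective
      (hm.comp h.symm.measurable) fun y => by simpa [φ] using hhS (h.symm y)
  have hSφ : S ∘ h.symm = h.symm ∘ φ := funext fun y => by simp [φ]
  rw [Measure.map_map S.measurable h.symm.measurable, hSφ,
    ← Measure.map_map h.symm.measurable φ.measurable, hφν.map_eq]

theorem bijOn_map_symm_invariantProbMeasures (h : α ≃ᵐ β) {S : α ≃ᵐ α} {T : β ≃ᵐ β}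
    {j m : α → ℤ} (hj : Measurable j) (hm : Measurable m)
    (hTh : ∀ x, T (h x) = h ((S.toEquiv ^ j x) x))
    (hhS : ∀ x, h (S x) = (T.toEquiv ^ m x) (h x)) :
    BijOn (fun ν => ν.map h.symm) (invariantProbMeasures T) (invariantProbMeasures S) := by
  have hTh' (y : β) : h.symm (T y) = (S.toEquiv ^ j (h.symm y)) (h.symm y) := by
    simpa using congrArg h.symm (hTh (h.symm y))
  refine InvOn.bijOn ⟨fun ν _ => h.map_map_symm, fun μ _ => h.map_symm_map⟩
    (mapsTo_map_symm_invariantProbMeasures h hm hhS) ?_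
  simpa using mapsTo_map_symm_invariantProbMeasures h.symm (hj.comp h.symm.measurable) hTh'

end MeasureTheory

theorem uniquely_ergodic_of_strong_orbit_equivalence_general
    {Y Y' : Type*}
    [MetricSpace Y] [MeasurableSpace Y] [BorelSpace Y]
    [MetricSpace Y'] [MeasurableSpace Y'] [BorelSpace Y']
    (S : Y ≃ₜ Y) (S' : Y' ≃ₜ Y') (h : Y ≃ₜ Y')
    (j m : Y → ℤ)
    (hj : ∃ y₀ : Y, ∀ y : Y, y ≠ y₀ → ContinuousAt j y)
    (hm : ∃ y₀ : Y, ∀ y : Y, y ≠ y₀ → ContinuousAt m y)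
    (hTh : ∀ y : Y, S' (h y) = h ((S.toEquiv ^ j y) y))
    (hhS : ∀ y : Y, h (S y) = (S'.toEquiv ^ m y) (h y))
    (hue : UniquelyErgodic (⇑S)) :
    UniquelyErgodic (⇑S') ∧
    Set.BijOn (fun ν : Measure Y' => ν.map h.symm)
      {ν : Measure Y' | IsProbabilityMeasure ν ∧ Measure.map (⇑S') ν = ν}
      {μ : Measure Y | IsProbabilityMeasure μ ∧ Measure.map (⇑S) μ = μ} := by
  obtain ⟨y₀, hj⟩ := hj
  obtain ⟨y₁, hm⟩ := hm
  have hbij : BijOn (fun ν => ν.map h.symm) (invariantProbMeasures S') (invariantProbMeasures S) :=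
    bijOn_map_symm_invariantProbMeasures h.toMeasurableEquiv (S := S.toMeasurableEquiv)
      (T := S'.toMeasurableEquiv) (measurable_of_forall_ne_continuousAt hj)
      (measurable_of_forall_ne_continuousAt hm) hTh hhS
  exact ⟨hbij.existsUnique_mem hue, hbij⟩

/-- Unique ergodicity transfers through (strong) orbit equivalence: if
`(Y, S)` is uniquely ergodic and `h : Y ≃ₜ Y'` is an orbit equivalence onto a
minimal Cantor system `(Y', S')` which is moreover a strong orbit equivalence,
then `(Y', S')` is uniquely ergodic, and pulling back invariant measures along
`h` is a bijection between the invariant probability measures. -/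
theorem uniquely_ergodic_of_strong_orbit_equivalence
    {Y Y' : Type*}
    [MetricSpace Y] [CompactSpace Y] [MeasurableSpace Y] [BorelSpace Y]
    [MetricSpace Y'] [CompactSpace Y'] [MeasurableSpace Y'] [BorelSpace Y']
    [TotallyDisconnectedSpace Y']
    (S : Y ≃ₜ Y) (S' : Y' ≃ₜ Y') (h : Y ≃ₜ Y')
    (horb : ∀ y : Y,
      (⇑h) '' (Set.range fun n : ℤ => (S.toEquiv ^ n) y)
        = Set.range fun n : ℤ => (S'.toEquiv ^ n) (h y))
    (j m : Y → ℤ)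
    (hj : ∃ y₀ : Y, ∀ y : Y, y ≠ y₀ → ContinuousAt j y)
    (hm : ∃ y₀ : Y, ∀ y : Y, y ≠ y₀ → ContinuousAt m y)
    (hTh : ∀ y : Y, S' (h y) = h ((S.toEquiv ^ j y) y))
    (hhS : ∀ y : Y, h (S y) = (S'.toEquiv ^ m y) (h y))
    (hmin : ∀ y' : Y', Dense (Set.range fun n : ℤ => (S'.toEquiv ^ n) y'))
    (hue : UniquelyErgodic (⇑S)) :
    UniquelyErgodic (⇑S') ∧
    Set.BijOn (fun ν : Measure Y' => ν.map h.symm)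
      {ν : Measure Y' | IsProbabilityMeasure ν ∧ Measure.map (⇑S') ν = ν}
      {μ : Measure Y | IsProbabilityMeasure μ ∧ Measure.map (⇑S) μ = μ} :=
  uniquely_ergodic_of_strong_orbit_equivalence_general S S' h j m hj hm hTh hhS hue
end
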